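/- Let m ≥ 4, let G = (ℤ/mℤ)², let g ∈ G, and let S = f₁^[m−1] · f₂^[m−1] · (f₁+f₂) ∈ Υ_nu(G), where (f₁,f₂) is a basis of G. If S' = f₁^[−1] · (f₁+f₂)^[−1] · S · (f₁+g) · (f₁+f₂−g) ∈ Υ_nu(G), then g ∈ {0, f₂} and S' = S. -/

import Mathlib

/-- `(e₁, e₂)` is a basis of the abelian group `G`, i.e. `G = ⟨e₁⟩ ⊕ ⟨e₂⟩`. -/
def IsBasis {G : Type*} [AddCommGroup G] (e₁ e₂ : G) : Prop :=
  AddSubgroup.zmultiples e₁ ⊔ AddSubgroup.zmultiples e₂ = ⊤ ∧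
    AddSubgroup.zmultiples e₁ ⊓ AddSubgroup.zmultiples e₂ = ⊥

/-- `Υ(G)` for `G = (ℤ/mℤ)²`: all sequences `e₁^[m-1] · ∏_{i=1}^m (xᵢe₁ + e₂)` for some
basis `(e₁, e₂)` and `x₁, …, x_m ∈ [0, m-1]` with `x₁ + ⋯ + x_m ≡ 1 (mod m)`. -/
def Upsilon (m : ℕ) : Set (Multiset (ZMod m × ZMod m)) :=
  { S | ∃ (e₁ e₂ : ZMod m × ZMod m) (x : Fin m → ℕ),
      IsBasis e₁ e₂ ∧ (∀ i, x i ≤ m - 1) ∧ (∑ i, x i) % m = 1 % m ∧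
      S = Multiset.replicate (m - 1) e₁ +
          Multiset.map (fun i => x i • e₁ + e₂) (Finset.univ : Finset (Fin m)).val }

/-- `Υ_u(G)`: members of `Υ(G)` with a unique term of multiplicity `m - 1`. -/
def UpsilonU (m : ℕ) : Set (Multiset (ZMod m × ZMod m)) :=
  { S | S ∈ Upsilon m ∧ ∃! g, S.count g = m - 1 }

/-- `Υ_nu(G)`: sequences `e₁^[m-1] · e₂^[m-1] · (e₁ + e₂)` for some basis `(e₁, e₂)`. -/
def UpsilonNU (m : ℕ) : Set (Multiset (ZMod m × ZMod m)) :=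
  { S | ∃ (e₁ e₂ : ZMod m × ZMod m), IsBasis e₁ e₂ ∧
      S = Multiset.replicate (m - 1) e₁ + Multiset.replicate (m - 1) e₂ + {e₁ + e₂} }

/-!
Every multiplicity in a member of `Υ_nu(G)` is `0`, `1` or `m - 1`. Unless `g ∈ {0, f₂}`, the
exchange removes one copy of `f₁` and puts none back, leaving `f₁` with multiplicity `m - 2`, which
is none of these once `m ≥ 4`. For `g ∈ {0, f₂}` the inserted pair is the removed one.
-/

open Multiset

theorem ZMod.not_isAddCyclic_prod_self {m : ℕ} (hm : m ≠ 1) : ¬ IsAddCyclic (ZMod m × ZMod m) := by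
  rw [AddGroup.isAddCyclic_prod_iff, Nat.card_zmod, Nat.coprime_self]
  tauto

namespace IsBasis

variable {G : Type*} [AddCommGroup G] {e₁ e₂ : G}

theorem left_ne_zero (hG : ¬ IsAddCyclic G) (h : IsBasis e₁ e₂) : e₁ ≠ 0 := by
  rintro rfl
  rw [IsBasis, AddSubgroup.zmultiples_zero_eq_bot, bot_sup_eq] at h
  exact hG (isAddCyclic_iff_exists_zmultiples_eq_top.mpr ⟨e₂, h.1⟩)

theorem right_ne_zero (hG : ¬ IsAddCyclic G) (h : IsBasis e₁ e₂) : e₂ ≠ 0 := by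
  rintro rfl
  rw [IsBasis, AddSubgroup.zmultiples_zero_eq_bot, sup_bot_eq] at h
  exact hG (isAddCyclic_iff_exists_zmultiples_eq_top.mpr ⟨e₁, h.1⟩)

theorem left_ne_right (hG : ¬ IsAddCyclic G) (h : IsBasis e₁ e₂) : e₁ ≠ e₂ := by
  intro heq
  have hbot := h.2
  rw [heq, inf_idem, AddSubgroup.zmultiples_eq_bot] at hbot
  exact h.right_ne_zero hG hbot

end IsBasis

section Multiplicities

variable {G : Type*} [AddCommGroup G]

theorem pair_add_sub_eq {f₁ f₂ g : G} (hg : g = 0 ∨ g = f₂) :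
    ({f₁ + g, f₁ + f₂ - g} : Multiset G) = {f₁, f₁ + f₂} := by
  rcases hg with rfl | rfl
  · simp
  · rw [add_sub_cancel_right, pair_comm]

theorem pair_le_replicate_add_replicate_add_singleton {f₁ : G} (f₂ : G) {n : ℕ} (hn : n ≠ 0) :
    ({f₁, f₁ + f₂} : Multiset G) ≤ replicate n f₁ + replicate n f₂ + {f₁ + f₂} := by
  rw [insert_eq_cons, ← singleton_add]
  gcongr
  exact (singleton_le.mpr (mem_replicate.mpr ⟨hn, rfl⟩)).trans (le_add_right _ _)

variable [DecidableEq G]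

theorem count_replicate_add_replicate_add_singleton (hG : ¬ IsAddCyclic G) {e₁ e₂ : G}
    (h : IsBasis e₁ e₂) (n : ℕ) (a : G) :
    (replicate n e₁ + replicate n e₂ + {e₁ + e₂}).count a ∈ ({0, 1, n} : Set ℕ) := by
  have h₁ := h.left_ne_zero hG
  have h₂ := h.right_ne_zero hG
  have h₁₂ := h.left_ne_right hG
  simp only [count_add, count_replicate, count_singleton]
  by_cases ha₁ : e₁ = a
  · subst ha₁
    have : e₁ ≠ e₁ + e₂ := fun h => h₂ (by simpa using h.symm)
    simp [h₁₂.symm, this]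
  by_cases ha₂ : e₂ = a
  · subst ha₂
    have : e₂ ≠ e₁ + e₂ := fun h => h₁ (by simpa using h.symm)
    simp [ha₁, this]
  by_cases ha : a = e₁ + e₂ <;> simp [ha₁, ha₂, ha, h₁, h₂]

theorem count_left_sub_pair_add_pair {f₁ f₂ g : G} (h₁₂ : f₁ ≠ f₂) (hg₀ : g ≠ 0) (hg₂ : g ≠ f₂)
    (n : ℕ) :
    ((replicate n f₁ + replicate n f₂ + {f₁ + f₂} - {f₁, f₁ + f₂}) + {f₁ + g, f₁ + f₂ - g}).count f₁
      = n - 1 := by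
  have hg₀' : f₁ ≠ f₁ + g := fun h => hg₀ (by simpa using h.symm)
  have hg₂' : f₁ ≠ f₁ + f₂ - g := fun h => hg₂ (by rw [eq_sub_iff_add_eq] at h; simpa using h)
  simp only [count_add, count_sub, count_replicate, count_singleton, insert_eq_cons, count_cons,
    if_neg h₁₂.symm, if_neg hg₀', if_neg hg₂', if_true]
  omega

end Multiplicities

theorem count_mem_of_mem_upsilonNU {m : ℕ} (hm : m ≠ 1) {S : Multiset (ZMod m × ZMod m)}
    (hS : S ∈ UpsilonNU m) (a : ZMod m × ZMod m) : S.count a ∈ ({0, 1, m - 1} : Set ℕ) := by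
  obtain ⟨e₁, e₂, he, rfl⟩ := hS
  exact count_replicate_add_replicate_add_singleton (ZMod.not_isAddCyclic_prod_self hm) he _ a

theorem stmt_11_general (m : ℕ) (hm : 4 ≤ m) (g f₁ f₂ : ZMod m × ZMod m)
    (hbasis : IsBasis f₁ f₂)
    (S : Multiset (ZMod m × ZMod m))
    (hS : S = Multiset.replicate (m - 1) f₁ + Multiset.replicate (m - 1) f₂ + {f₁ + f₂})
    (S' : Multiset (ZMod m × ZMod m))
    (hS' : S' = (S - {f₁, f₁ + f₂}) + {f₁ + g, f₁ + f₂ - g})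
    (hS'U : S' ∈ UpsilonNU m) :
    (g = 0 ∨ g = f₂) ∧ S' = S := by
  have hg : g = 0 ∨ g = f₂ := by
    by_contra! hg
    have hcount := count_mem_of_mem_upsilonNU (by omega) hS'U f₁
    rw [hS', hS, count_left_sub_pair_add_pair (hbasis.left_ne_right
      (ZMod.not_isAddCyclic_prod_self (by omega))) hg.1 hg.2] at hcount
    simp only [Set.mem_insert_iff, Set.mem_singleton_iff] at hcount
    omega
  refine ⟨hg, ?_⟩
  have hle : ({f₁, f₁ + f₂} : Multiset _) ≤ S :=
    hS ▸ pair_le_replicate_add_replicate_add_singleton f₂ (by omega)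
  rw [hS', pair_add_sub_eq hg, tsub_add_cancel_of_le hle]

theorem stmt_11 (m : ℕ) (hm : 4 ≤ m) (g f₁ f₂ : ZMod m × ZMod m)
    (hbasis : IsBasis f₁ f₂)
    (S : Multiset (ZMod m × ZMod m))
    (hS : S = Multiset.replicate (m - 1) f₁ + Multiset.replicate (m - 1) f₂ + {f₁ + f₂})
    (hSNU : S ∈ UpsilonNU m)
    (S' : Multiset (ZMod m × ZMod m))
    (hS' : S' = (S - {f₁, f₁ + f₂}) + {f₁ + g, f₁ + f₂ - g})
    (hS'U : S' ∈ UpsilonNU m) :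
    (g = 0 ∨ g = f₂) ∧ S' = S :=
  stmt_11_general m hm g f₁ f₂ hbasis S hS S' hS' hS'U
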